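/- (Multiple Neural Forecasting Proposition, univariate bound) Let c ≥ 1 and T ≥ 1 be integers. For each t = 1,...,T, let {y_t^{(i)}}_{i=1}^c be independent random variables with common mean μ̂_t, all bounded by λ in absolute value. Assume sup_t |μ̂_t - μ_t| ≤ b and |x_t - μ_t| ≤ σ for all t. Then there exists a realization {ỹ_t^{(i)}} such that ∑_{t=1}^T |x_t - (1/c)∑_{i=1}^c ỹ_t^{(i)}| ≤ T(λ + √c(b + σ))/√c. -/

import Mathlib

open MeasureTheory ProbabilityTheory Finset

/-!
For each `t`, the sum of the `c` independent candidates has variance at most `c λ²`, so by the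
first moment method some outcome puts it within `√c λ` of its mean `c μ̂_t`; the average is then
within `λ / √c` of `μ̂_t`, hence within `λ / √c + b + σ` of `x_t`. Choosing such an outcome for
every `t` and summing gives the bound.
-/

namespace ProbabilityTheory

variable {Ω : Type*} [MeasurableSpace Ω] {μ : Measure Ω} [IsProbabilityMeasure μ]

lemma exists_abs_sub_integral_le_sqrt_variance {X : Ω → ℝ} (hX : MemLp X 2 μ) :
    ∃ ω, |X ω - μ[X]| ≤ √Var[X; μ] := by
  obtain ⟨ω, hω⟩ := exists_le_integral (hX.sub (memLp_const μ[X])).integrable_sq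
  exact ⟨ω, Real.abs_le_sqrt (by rwa [variance_eq_integral hX.aemeasurable])⟩

lemma variance_le_sq_of_abs_le {X : Ω → ℝ} {lam : ℝ} (hX : AEMeasurable X μ)
    (h : ∀ᵐ ω ∂μ, |X ω| ≤ lam) : Var[X; μ] ≤ lam ^ 2 :=
  (variance_le_sq_of_bounded (h.mono fun _ hω ↦ abs_le.mp hω) hX).trans_eq (by ring)

lemma exists_abs_sum_sub_sum_integral_le {ι : Type*} {X : ι → Ω → ℝ} {s : Finset ι} {lam : ℝ}
    (hlam : 0 ≤ lam) (hX : ∀ i ∈ s, AEMeasurable (X i) μ)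
    (hindep : Set.Pairwise s fun i j ↦ X i ⟂ᵢ[μ] X j) (hbdd : ∀ i ∈ s, ∀ᵐ ω ∂μ, |X i ω| ≤ lam) :
    ∃ ω, |∑ i ∈ s, X i ω - ∑ i ∈ s, μ[X i]| ≤ √(#s : ℝ) * lam := by
  have hL2 : ∀ i ∈ s, MemLp (X i) 2 μ := fun i hi ↦
    memLp_of_bounded ((hbdd i hi).mono fun _ hω ↦ abs_le.mp hω) (hX i hi).aestronglyMeasurable 2
  have hvar : Var[∑ i ∈ s, X i; μ] ≤ #s * lam ^ 2 := by
    rw [IndepFun.variance_sum hL2 hindep]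
    simpa using sum_le_sum fun i hi ↦ variance_le_sq_of_abs_le (hX i hi) (hbdd i hi)
  obtain ⟨ω, hω⟩ := exists_abs_sub_integral_le_sqrt_variance (memLp_finsetSum' s hL2)
  refine ⟨ω, ?_⟩
  simp only [Finset.sum_apply] at hω
  rw [integral_finsetSum s fun i hi ↦ (hL2 i hi).integrable one_le_two] at hω
  calc |∑ i ∈ s, X i ω - ∑ i ∈ s, μ[X i]| ≤ √Var[∑ i ∈ s, X i; μ] := hω
    _ ≤ √(#s * lam ^ 2) := Real.sqrt_le_sqrt hvar
    _ = √(#s : ℝ) * lam := by rw [Real.sqrt_mul (Nat.cast_nonneg _), Real.sqrt_sq hlam]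

lemma exists_abs_average_sub_le {n : ℕ} (hn : 0 < n) {X : Fin n → Ω → ℝ} {m lam : ℝ}
    (hlam : 0 ≤ lam) (hX : ∀ i, AEMeasurable (X i) μ) (hindep : iIndepFun X μ)
    (hmean : ∀ i, μ[X i] = m) (hbdd : ∀ i, ∀ᵐ ω ∂μ, |X i ω| ≤ lam) :
    ∃ ω, |(1 / (n : ℝ)) * ∑ i, X i ω - m| ≤ lam / √n := by
  obtain ⟨ω, hω⟩ := exists_abs_sum_sub_sum_integral_le (s := univ) hlam (fun i _ ↦ hX i)
    (fun i _ j _ hij ↦ hindep.indepFun hij) (fun i _ ↦ hbdd i)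
  refine ⟨ω, ?_⟩
  have hn' : (0 : ℝ) < n := Nat.cast_pos.mpr hn
  simp only [hmean, sum_const, card_univ, Fintype.card_fin, nsmul_eq_mul] at hω
  have hsub : (1 / (n : ℝ)) * ∑ i, X i ω - m = (∑ i, X i ω - n * m) / n := by field_simp
  calc |(1 / (n : ℝ)) * ∑ i, X i ω - m| = |∑ i, X i ω - n * m| / n := by
        rw [hsub, abs_div, abs_of_pos hn']
    _ ≤ √n * lam / n := by gcongr
    _ = lam / √n := by
        rw [div_eq_div_iff hn'.ne' (Real.sqrt_pos.mpr hn').ne', mul_right_comm,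
          Real.mul_self_sqrt hn'.le, mul_comm]

end ProbabilityTheory

theorem multiple_neural_forecasting_proposition_general
    {Ω : Type*} [MeasurableSpace Ω] (μ : Measure Ω) [IsProbabilityMeasure μ]
    (T c : ℕ) (hc : 0 < c)
    (lam b σ : ℝ) (hlam : 0 < lam)
    (y : Fin T → Fin c → Ω → ℝ)
    (x mu muhat : Fin T → ℝ)
    (hmeas : ∀ t i, Measurable (y t i))
    (hindep : ∀ t, iIndepFun (y t) μ)
    (hmean : ∀ t i, ∫ ω, y t i ω ∂μ = muhat t)
    (hbdd : ∀ t i, ∀ᵐ ω ∂μ, |y t i ω| ≤ lam)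
    (hbias : ∀ t, |muhat t - mu t| ≤ b)
    (hnoise : ∀ t, |x t - mu t| ≤ σ) :
    ∃ ytilde : Fin T → Fin c → ℝ,
      (∀ t, ∃ ω, ∀ i, ytilde t i = y t i ω) ∧
      ∑ t, |x t - (1 / (c : ℝ)) * ∑ i, ytilde t i|
        ≤ (T : ℝ) * (lam + Real.sqrt c * (b + σ)) / Real.sqrt c := by
  have hclose : ∀ t, ∃ ω, |x t - (1 / (c : ℝ)) * ∑ i, y t i ω| ≤ σ + (b + lam / √c) := by
    intro t
    obtain ⟨ω, hω⟩ := exists_abs_average_sub_le hc hlam.le (fun i ↦ (hmeas t i).aemeasurable)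
      (hindep t) (hmean t) (hbdd t)
    refine ⟨ω, (abs_sub_le _ (mu t) _).trans (add_le_add (hnoise t) ?_)⟩
    exact (abs_sub_le _ (muhat t) _).trans <|
      add_le_add ((abs_sub_comm _ _).trans_le (hbias t)) ((abs_sub_comm _ _).trans_le hω)
  choose ω hω using hclose
  refine ⟨fun t i ↦ y t i (ω t), fun t ↦ ⟨ω t, fun _ ↦ rfl⟩, ?_⟩
  have hc' : 0 < √(c : ℝ) := Real.sqrt_pos.mpr (Nat.cast_pos.mpr hc)
  calc ∑ t, |x t - (1 / (c : ℝ)) * ∑ i, y t i (ω t)| ≤ ∑ _t : Fin T, (σ + (b + lam / √c)) :=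
        sum_le_sum fun t _ ↦ hω t
    _ = (T : ℝ) * (lam + √c * (b + σ)) / √c := by
        rw [sum_const, card_univ, Fintype.card_fin, nsmul_eq_mul]
        field_simp
        ring

/-- Multiple Neural Forecasting Proposition (univariate bound): with, for each
timestep `t`, `c` independent candidate forecasts of common mean `muhat t` bounded
by `lam`, a predictive bias bound `b` and an observation noise bound `σ`, there is
a realization of the candidates whose per-timestep averages approximate the
observations with total `ℓ¹` error at most `T (lam + √c (b + σ)) / √c`. -/
theorem multiple_neural_forecasting_proposition
    {Ω : Type*} [MeasurableSpace Ω] (μ : Measure Ω) [IsProbabilityMeasure μ]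
    (T c : ℕ) (hT : 0 < T) (hc : 0 < c)
    (lam b σ : ℝ) (hlam : 0 < lam) (hb : 0 ≤ b) (hσ : 0 ≤ σ)
    (y : Fin T → Fin c → Ω → ℝ)
    (x mu muhat : Fin T → ℝ)
    (hmeas : ∀ t i, Measurable (y t i))
    (hindep : ∀ t, iIndepFun (y t) μ)
    (hident : ∀ t i j, IdentDistrib (y t i) (y t j) μ μ)
    (hmean : ∀ t i, ∫ ω, y t i ω ∂μ = muhat t)
    (hbdd : ∀ t i, ∀ᵐ ω ∂μ, |y t i ω| ≤ lam)
    (hbias : ∀ t, |muhat t - mu t| ≤ b)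
    (hnoise : ∀ t, |x t - mu t| ≤ σ) :
    ∃ ytilde : Fin T → Fin c → ℝ,
      (∀ t, ∃ ω, ∀ i, ytilde t i = y t i ω) ∧
      ∑ t, |x t - (1 / (c : ℝ)) * ∑ i, ytilde t i|
        ≤ (T : ℝ) * (lam + Real.sqrt c * (b + σ)) / Real.sqrt c :=
  multiple_neural_forecasting_proposition_general μ T c hc lam b σ hlam y x mu muhat hmeas hindep
    hmean hbdd hbias hnoise
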